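/- arXiv:1604.00959 — 7 statements merged into one kernel-verified Lean document; each statement's English description precedes it below -/
import Mathlib

section
/- Every (-ω)-reset A-graph is deterministic and complete. -/
/- Left infinite words over A are modelled as functions ℕ → A, where index 0 is
   the rightmost letter.  Appending a finite word on the right: -/

def lapp {A : Type*} (x : ℕ → A) (u : List A) : ℕ → A := fun n =>
  if h : n < u.length then u.reverse[n]'(by simpa using h) else x (n - u.length)

/-- u ∈ A* is a suffix of the left infinite word x -/
def IsLSuffix {A : Type*} (u : List A) (x : ℕ → A) : Prop := ∃ y : ℕ → A, x = lapp y u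

/-- right congruence on A^{-ω}: an equivalence relation compatible with the
  right action of A* (equivalently, with appending each letter) -/
def IsRightCongruence {A : Type*} (ρ : (ℕ → A) → (ℕ → A) → Prop) : Prop :=
  Equivalence ρ ∧ ∀ x y : ℕ → A, ∀ a : A, ρ x y → ρ (lapp x [a]) (lapp y [a])

section Graphs

variable {A Q : Type*}

/-- a left infinite path labelled x ending at q, in the A-graph with edge
  relation E (E p a q : there is an edge from p to q labelled a) -/
def HasLInfPath (E : Q → A → Q → Prop) (x : ℕ → A) (q : Q) : Prop :=
  ∃ f : ℕ → Q, f 0 = q ∧ ∀ n : ℕ, E (f (n + 1)) (x n) (f n)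

def OmegaDeterministic (E : Q → A → Q → Prop) : Prop :=
  ∀ x : ℕ → A, ∀ q q' : Q, HasLInfPath E x q → HasLInfPath E x q' → q = q'

def OmegaComplete (E : Q → A → Q → Prop) : Prop :=
  ∀ x : ℕ → A, ∃ q : Q, HasLInfPath E x q

def OmegaTrim (E : Q → A → Q → Prop) : Prop :=
  ∀ q : Q, ∃ x : ℕ → A, HasLInfPath E x q

/-- (-ω)-reset graph -/
def OmegaReset (E : Q → A → Q → Prop) : Prop :=
  OmegaDeterministic E ∧ OmegaComplete E ∧ OmegaTrim E

/-- finite paths: HasPath E q u q' means u labels a path from q to q' -/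
def HasPath (E : Q → A → Q → Prop) : Q → List A → Q → Prop
  | q, [], q' => q = q'
  | q, a :: u, q' => ∃ p : Q, E q a p ∧ HasPath E p u q'

end Graphs

/-- the setoid on A^{-ω} given by a right congruence -/
def caySetoid {A : Type*} {ρ : (ℕ → A) → (ℕ → A) → Prop} (hρ : IsRightCongruence ρ) :
    Setoid (ℕ → A) := ⟨ρ, hρ.1⟩

/-- the edge relation of the Cayley graph Cay(ρ): edges (uρ, a, (ua)ρ) -/
def cayE {A : Type*} {ρ : (ℕ → A) → (ℕ → A) → Prop} (hρ : IsRightCongruence ρ) :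
    Quotient (caySetoid hρ) → A → Quotient (caySetoid hρ) → Prop :=
  fun c a c' => ∃ u : ℕ → A, c = Quotient.mk (caySetoid hρ) u ∧
    c' = Quotient.mk (caySetoid hρ) (lapp u [a])

/-!
Every vertex `p` is reached by a left infinite path, labelled `x` say. An edge `p →a q` extends
it to a path labelled `xa` ending at `q`, so two `a`-successors of `p` are both reached by `xa`
and (-ω)-determinism identifies them. Conversely, by (-ω)-completeness some path is labelled
`xa`; dropping its last edge leaves a path labelled `x`, which by (-ω)-determinism ends at `p`,
so that last edge is an `a`-edge leaving `p`.
-/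

section LInfPath

variable {A Q : Type*} {E : Q → A → Q → Prop}

@[simp]
lemma lapp_singleton_zero (x : ℕ → A) (a : A) : lapp x [a] 0 = a := by
  simp [lapp]

@[simp]
lemma lapp_singleton_succ (x : ℕ → A) (a : A) (n : ℕ) : lapp x [a] (n + 1) = x n := by
  simp [lapp]

lemma HasLInfPath.snoc {x : ℕ → A} {a : A} {p q : Q} (hp : HasLInfPath E x p) (he : E p a q) :
    HasLInfPath E (lapp x [a]) q := by
  obtain ⟨f, rfl, hf⟩ := hp
  refine ⟨fun | 0 => q | n + 1 => f n, rfl, fun n => ?_⟩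
  cases n with
  | zero => simpa using he
  | succ n => simpa using hf n

lemma HasLInfPath.exists_of_snoc {x : ℕ → A} {a : A} {q : Q}
    (hq : HasLInfPath E (lapp x [a]) q) : ∃ p, HasLInfPath E x p ∧ E p a q := by
  obtain ⟨f, rfl, hf⟩ := hq
  refine ⟨f 1, ⟨fun n => f (n + 1), rfl, fun n => ?_⟩, by simpa using hf 0⟩
  simpa using hf (n + 1)

lemma OmegaDeterministic.deterministic (hdet : OmegaDeterministic E) (htrim : OmegaTrim E)
    (p : Q) (a : A) (q q' : Q) (hq : E p a q) (hq' : E p a q') : q = q' := by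
  obtain ⟨x, hx⟩ := htrim p
  exact hdet _ q q' (hx.snoc hq) (hx.snoc hq')

lemma OmegaDeterministic.complete (hdet : OmegaDeterministic E) (hcomp : OmegaComplete E)
    (htrim : OmegaTrim E) (p : Q) (a : A) : ∃ q, E p a q := by
  obtain ⟨x, hx⟩ := htrim p
  obtain ⟨q, hq⟩ := hcomp (lapp x [a])
  obtain ⟨p', hp', he⟩ := hq.exists_of_snoc
  obtain rfl := hdet x p' p hp' hx
  exact ⟨q, he⟩

end LInfPath

/-- every (-ω)-reset A-graph is deterministic and complete. -/
theorem omegaReset_deterministic_complete {A Q : Type*} (E : Q → A → Q → Prop)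
    (h : OmegaReset E) :
    (∀ p : Q, ∀ a : A, ∀ q q' : Q, E p a q → E p a q' → q = q') ∧
    (∀ p : Q, ∀ a : A, ∃ q : Q, E p a q) :=
  let ⟨hdet, hcomp, htrim⟩ := h
  ⟨hdet.deterministic htrim, hdet.complete hcomp htrim⟩
end

section
/- If ρ is a closed right congruence on A^{-ω}, then in Cay(ρ) every left infinite path labeled x ends at the vertex xρ, and Cay(ρ) is a (-ω)-reset graph. -/
open Filter Topology PiNat

section Lapp

variable {A : Type*}

lemma lapp_nil (y : ℕ → A) : lapp y [] = y := by
  funext n; simp [lapp]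

lemma lapp_append (y : ℕ → A) (u v : List A) : lapp (lapp y u) v = lapp y (u ++ v) := by
  funext n
  simp only [lapp, List.reverse_append, List.length_append]
  by_cases h1 : n < v.length
  · rw [dif_pos h1, dif_pos (by omega), List.getElem_append_left (by simpa using h1)]
  · rw [dif_neg h1]
    by_cases h2 : n - v.length < u.length
    · rw [dif_pos h2, dif_pos (by omega), List.getElem_append_right (by simpa using h1)]
      simp
    · rw [dif_neg h2, dif_neg (by omega)]
      congr 1
      omega

lemma lapp_singleton_shift (x : ℕ → A) (n : ℕ) :
    lapp (fun m => x (m + (n + 1))) [x n] = fun m => x (m + n) := by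
  funext m
  rcases m with _ | m
  · simp [lapp]
  · simp only [lapp, List.length_singleton, Nat.add_lt_iff_lt_sub_right, Nat.sub_self,
      Nat.not_lt_zero, dite_false, Nat.add_sub_cancel]
    congr 1
    omega

/-- `PiNat.res x n = [x (n-1), …, x 0]` is the suffix of length `n` of the left infinite
word `x`. -/
lemma lapp_res_apply_of_lt (y x : ℕ → A) {m n : ℕ} (hm : m < n) :
    lapp y (res x n) m = x m := by
  induction n generalizing y with
  | zero => omega
  | succ n ih =>
    rw [res_succ, ← List.singleton_append, ← lapp_append]
    rcases Nat.lt_succ_iff_lt_or_eq.1 hm with hm | rfl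
    · exact ih _ hm
    · simp [lapp]

lemma tendsto_lapp_res [TopologicalSpace A] [DiscreteTopology A] (y : ℕ → ℕ → A)
    (x : ℕ → A) : Tendsto (fun n => lapp (y n) (res x n)) atTop (𝓝 x) := by
  rw [tendsto_pi_nhds]
  intro m
  rw [nhds_discrete, tendsto_pure]
  exact eventually_atTop.2 ⟨m + 1, fun n hn => lapp_res_apply_of_lt _ _ (by omega)⟩

end Lapp

section Cayley

variable {A : Type*} {ρ : (ℕ → A) → (ℕ → A) → Prop} (hρ : IsRightCongruence ρ)

local notation "⟦" u "⟧ρ" => Quotient.mk (caySetoid hρ) u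

lemma cayE_mk_iff {u : ℕ → A} {a : A} {c : Quotient (caySetoid hρ)} :
    cayE hρ ⟦u⟧ρ a c ↔ c = ⟦lapp u [a]⟧ρ := by
  constructor
  · rintro ⟨v, huv, rfl⟩
    exact Quotient.sound (hρ.2 v u a (hρ.1.symm (Quotient.exact huv)))
  · rintro rfl
    exact ⟨u, rfl, rfl⟩

lemma hasLInfPath_cayE_mk (x : ℕ → A) : HasLInfPath (cayE hρ) x ⟦x⟧ρ :=
  ⟨fun n => ⟦fun m => x (m + n)⟧ρ, rfl, fun n => by
    rw [cayE_mk_iff, lapp_singleton_shift]⟩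

/-- Edges of `Cay(ρ)` are determined by their source and label, so a path can be read
backwards from any of its vertices. -/
lemma cayE_path_zero_eq {x : ℕ → A} {f : ℕ → Quotient (caySetoid hρ)}
    (hf : ∀ n, cayE hρ (f (n + 1)) (x n) (f n)) (n : ℕ) (u : ℕ → A) (hu : f n = ⟦u⟧ρ) :
    f 0 = ⟦lapp u (res x n)⟧ρ := by
  induction n generalizing u with
  | zero => rw [hu, res_zero, lapp_nil]
  | succ n ih =>
    have hfn : f n = ⟦lapp u [x n]⟧ρ := (cayE_mk_iff hρ).1 (hu ▸ hf n)
    rw [ih _ hfn, lapp_append, List.singleton_append, res_succ]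

/-- The words `lapp (f n).out (res x n)` all lie in the class of the end of the path and
converge to `x`, so closedness of `ρ` puts `x` in that class. -/
lemma HasLInfPath.cayE_eq_mk [TopologicalSpace A] [DiscreteTopology A]
    (hclosed : IsClosed {p : (ℕ → A) × (ℕ → A) | ρ p.1 p.2}) {x : ℕ → A}
    {q : Quotient (caySetoid hρ)} (h : HasLInfPath (cayE hρ) x q) : q = ⟦x⟧ρ := by
  obtain ⟨f, rfl, hf⟩ := h
  have hclass : ∀ n, ρ (lapp (f n).out (res x n)) (f 0).out := fun n =>
    Quotient.exact ((cayE_path_zero_eq hρ hf n _ (f n).out_eq.symm).symm.trans (f 0).out_eq.symm)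
  have hlim : ρ x (f 0).out :=
    hclosed.mem_of_tendsto ((tendsto_lapp_res _ x).prodMk_nhds tendsto_const_nhds)
      (Eventually.of_forall hclass)
  rw [← (f 0).out_eq]
  exact Quotient.sound (hρ.1.symm hlim)

end Cayley

/-- Here `A^{-ω} = ℕ → A` carries the product of the discrete topologies, which is the
topology of the suffix ultrametric. -/
theorem cayley_closed_omegaReset {A : Type*} [TopologicalSpace A] [DiscreteTopology A]
    (ρ : (ℕ → A) → (ℕ → A) → Prop) (hρ : IsRightCongruence ρ)
    (hclosed : IsClosed {p : (ℕ → A) × (ℕ → A) | ρ p.1 p.2}) :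
    (∀ x : ℕ → A, ∀ q : Quotient (caySetoid hρ),
        HasLInfPath (cayE hρ) x q → q = Quotient.mk (caySetoid hρ) x) ∧
    OmegaReset (cayE hρ) := by
  have ends : ∀ x q, HasLInfPath (cayE hρ) x q → q = Quotient.mk (caySetoid hρ) x :=
    fun _ _ h => h.cayE_eq_mk hρ hclosed
  refine ⟨ends, fun x q q' hq hq' => (ends x q hq).trans (ends x q' hq').symm,
    fun x => ⟨_, hasLInfPath_cayE_mk hρ x⟩, fun q => ?_⟩
  induction q using Quotient.inductionOn with
  | h u => exact ⟨u, hasLInfPath_cayE_mk hρ u⟩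
end

section
/- For a right congruence ρ on A^{-ω}, the following are equivalent: (i) ρ is an open subset of A^{-ω} × A^{-ω}; (ii) every ρ-class is open; (iii) ρ = σ̂ for some right congruence σ on A^k and some k ≥ 1, where x σ̂ y iff the length-k suffixes of x and y are σ-related; (vi) ρ is closed and has finitely many classes. -/
/- Words of length k over A are modelled as Fin k → A, index 0 being the
   rightmost letter (so that `fun i : Fin k => x i` is the length-k suffix ξ_k
   of the left infinite word x).  The right action of a letter: -/

def wcons {A : Type*} {k : ℕ} (a : A) (u : Fin k → A) : Fin k → A :=
  fun i => if h : (i : ℕ) = 0 then a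
    else u ⟨(i : ℕ) - 1, Nat.lt_of_le_of_lt (Nat.sub_le _ _) i.isLt⟩

/-- appending a length-k word on the right of a left infinite word -/
def lappF {A : Type*} {k : ℕ} (x : ℕ → A) (u : Fin k → A) : ℕ → A :=
  fun n => if h : n < k then u ⟨n, h⟩ else x (n - k)

/-!
An open right congruence on the compact space `A^{-ω}` contains, by a Lebesgue-number argument
over a finite cover by cylinders, the relation "same suffix of length `k`" for some `k ≥ 1`; so it
factors through the length-`k` suffix map, which makes it clopen with finitely many classes and
induces a right congruence on `A^k`. Conversely, if a closed equivalence has finitely many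
classes, each class is open as the complement of the finite union of the other (closed) classes.
-/

open Set Filter PiNat

section Equivalence

variable {X Y : Type*} {r : X → X → Prop} {s : Y → Y → Prop} {f : X → Y}

theorem finite_rel_classes_of_iff_comap [Finite Y] (hrs : ∀ x y, r x y ↔ s (f x) (f y)) :
    {c : Set X | ∃ x, c = {y | r x y}}.Finite := by
  refine (finite_range fun u : Y => {y | s u (f y)}).subset ?_
  rintro c ⟨x, rfl⟩
  exact ⟨f x, by ext y; exact (hrs x y).symm⟩

variable [TopologicalSpace X]

theorem isOpen_setOf_rel_iff_forall_isOpen (hr : Equivalence r) :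
    IsOpen {p : X × X | r p.1 p.2} ↔ ∀ x, IsOpen {y | r x y} := by
  refine ⟨fun h x => h.preimage (Continuous.prodMk_right x), fun h => ?_⟩
  have hunion : {p : X × X | r p.1 p.2} = ⋃ x, {y | r x y} ×ˢ {y | r x y} := by
    ext p
    refine ⟨fun hp => mem_iUnion.2 ⟨p.1, hr.refl p.1, hp⟩, fun hp => ?_⟩
    obtain ⟨x, hx₁, hx₂⟩ := mem_iUnion.1 hp
    exact hr.trans (hr.symm hx₁) hx₂
  rw [hunion]
  exact isOpen_iUnion fun x => (h x).prod (h x)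

theorem isOpen_rel_class_of_isClosed_of_finite (hr : Equivalence r)
    (hclosed : IsClosed {p : X × X | r p.1 p.2})
    (hfin : {s : Set X | ∃ x, s = {y | r x y}}.Finite) (x : X) : IsOpen {y | r x y} := by
  have hcompl : {y | r x y}ᶜ = ⋃ s ∈ {s | (∃ w, s = {y | r w y}) ∧ x ∉ s}, s := by
    ext y
    refine ⟨fun hy => mem_biUnion ⟨⟨y, rfl⟩, fun hyx => hy (hr.symm hyx)⟩ (hr.refl y), ?_⟩
    intro hy hxy
    obtain ⟨s, ⟨⟨w, rfl⟩, hxs⟩, hys⟩ := mem_iUnion₂.1 hy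
    exact hxs (hr.trans hys (hr.symm hxy))
  rw [← isClosed_compl_iff, hcompl]
  refine (hfin.subset fun s hs => hs.1).isClosed_biUnion ?_
  rintro s ⟨⟨w, rfl⟩, -⟩
  exact hclosed.preimage (Continuous.prodMk_right w)

theorem isClopen_setOf_rel_of_iff_comap [TopologicalSpace Y] [DiscreteTopology Y]
    (hf : Continuous f) (hrs : ∀ x y, r x y ↔ s (f x) (f y)) :
    IsClopen {p : X × X | r p.1 p.2} := by
  have hpre : {p : X × X | r p.1 p.2} = Prod.map f f ⁻¹' {q | s q.1 q.2} := by
    ext p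
    exact hrs p.1 p.2
  rw [hpre]
  exact (isClopen_discrete _).preimage (hf.prodMap hf)

end Equivalence

section Cylinder

variable {A : Type*}

theorem eventually_rel_of_mem_cylinder
    [TopologicalSpace A] [DiscreteTopology A] [CompactSpace A] {r : (ℕ → A) → (ℕ → A) → Prop}
    (hr : Equivalence r) (hopen : ∀ x, IsOpen {y | r x y}) :
    ∀ᶠ k in atTop, ∀ x y, y ∈ cylinder x k → r x y := by
  have hlocal : ∀ x, ∃ n, cylinder x n ⊆ {y | r x y} := fun x => by
    obtain ⟨_, ⟨x', n, rfl⟩, hx, hsub⟩ :=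
      (isTopologicalBasis_cylinders _).exists_subset_of_mem_open (hr.refl x) (hopen x)
    exact ⟨n, mem_cylinder_iff_eq.1 hx ▸ hsub⟩
  choose N hN using hlocal
  obtain ⟨t, ht⟩ := isCompact_univ.elim_finite_subcover (fun x => cylinder x (N x))
    (fun x => isOpen_cylinder _ x _) (fun x _ => mem_iUnion.2 ⟨x, self_mem_cylinder _ _⟩)
  filter_upwards [eventually_ge_atTop (t.sup N)] with k hk x y hxy
  obtain ⟨z, hz, hxz⟩ := mem_iUnion₂.1 (ht (mem_univ x))
  have hyx : y ∈ cylinder x (N z) := cylinder_anti x ((Finset.le_sup hz).trans hk) hxy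
  have hyz : y ∈ cylinder z (N z) := mem_cylinder_iff_eq.1 hxz ▸ hyx
  exact hr.trans (hr.symm (hN z hxz)) (hN z hyz)

theorem lappF_mem_cylinder (z x : ℕ → A) (k : ℕ) :
    lappF z (fun i : Fin k => x i) ∈ cylinder x k := fun n hn => by
  simp [lappF, hn]

theorem lapp_lappF_mem_cylinder {k : ℕ} (z : ℕ → A) (w : Fin k → A) (a : A) :
    lapp (lappF z w) [a] ∈ cylinder (lappF z (wcons a w)) k := fun n hn => by
  rcases Nat.eq_zero_or_pos n with rfl | hpos
  · simp [lapp, lappF, wcons, hn]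
  · have hn' : n - 1 < k := by omega
    simp [lapp, lappF, wcons, hn, hn', hpos.ne', Nat.not_lt_of_ge hpos]

/-- `ρ = σ̂` for a right congruence `σ` on `A^k`. -/
def IsSuffixLift (ρ : (ℕ → A) → (ℕ → A) → Prop) (k : ℕ) : Prop :=
  ∃ σ : (Fin k → A) → (Fin k → A) → Prop,
    (Equivalence σ ∧ ∀ u v : Fin k → A, ∀ a : A, σ u v → σ (wcons a u) (wcons a v)) ∧
    (∀ x y : ℕ → A, ρ x y ↔ σ (fun i : Fin k => x i) (fun i : Fin k => y i))

/-- `σ` is read off `ρ` through any fixed completion of length-`k` words to the left. -/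
theorem isSuffixLift_of_rel_of_mem_cylinder [Nonempty A]
    {ρ : (ℕ → A) → (ℕ → A) → Prop} (hρ : IsRightCongruence ρ) {k : ℕ}
    (hk : ∀ x y, y ∈ cylinder x k → ρ x y) : IsSuffixLift ρ k := by
  obtain ⟨hequiv, hcongr⟩ := hρ
  let z : ℕ → A := fun _ => Classical.arbitrary A
  have hsuffix : ∀ x, ρ x (lappF z fun i : Fin k => x i) := fun x =>
    hk _ _ (lappF_mem_cylinder z x k)
  have happend : ∀ (w : Fin k → A) (a : A), ρ (lappF z (wcons a w)) (lapp (lappF z w) [a]) :=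
    fun w a => hk _ _ (lapp_lappF_mem_cylinder z w a)
  refine ⟨fun u v => ρ (lappF z u) (lappF z v),
    ⟨⟨fun u => hequiv.refl _, hequiv.symm, hequiv.trans⟩, fun u v a huv => ?_⟩,
    fun x y => ⟨fun hxy => ?_, fun hxy => ?_⟩⟩
  · exact hequiv.trans (happend u a)
      (hequiv.trans (hcongr _ _ a huv) (hequiv.symm (happend v a)))
  · exact hequiv.trans (hequiv.symm (hsuffix x)) (hequiv.trans hxy (hsuffix y))
  · exact hequiv.trans (hsuffix x) (hequiv.trans hxy (hequiv.symm (hsuffix y)))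

theorem IsSuffixLift.isClopen [TopologicalSpace A] [DiscreteTopology A]
    {ρ : (ℕ → A) → (ℕ → A) → Prop} {k : ℕ} (h : IsSuffixLift ρ k) :
    IsClopen {p : (ℕ → A) × (ℕ → A) | ρ p.1 p.2} :=
  let ⟨_, _, hσ⟩ := h
  isClopen_setOf_rel_of_iff_comap (continuous_pi fun i : Fin k => continuous_apply (i : ℕ)) hσ

theorem IsSuffixLift.finite_classes [Finite A] {ρ : (ℕ → A) → (ℕ → A) → Prop} {k : ℕ}
    (h : IsSuffixLift ρ k) : {c : Set (ℕ → A) | ∃ x, c = {y | ρ x y}}.Finite :=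
  let ⟨_, _, hσ⟩ := h
  finite_rel_classes_of_iff_comap hσ

end Cylinder

/-- for a right congruence ρ on A^{-ω}: ρ is open iff all ρ-classes
  are open, iff ρ is the lift σ̂ of a right congruence σ on A^k for some k ≥ 1,
  iff ρ is closed of finite index. -/
theorem open_rightCongruence_characterizations {A : Type*} [Fintype A] [Nonempty A]
    [TopologicalSpace A] [DiscreteTopology A]
    (ρ : (ℕ → A) → (ℕ → A) → Prop) (hρ : IsRightCongruence ρ) :
    ((IsOpen {p : (ℕ → A) × (ℕ → A) | ρ p.1 p.2}) ↔ (∀ x : ℕ → A, IsOpen {y | ρ x y})) ∧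
    ((IsOpen {p : (ℕ → A) × (ℕ → A) | ρ p.1 p.2}) ↔
      (∃ k : ℕ, 1 ≤ k ∧ ∃ σ : (Fin k → A) → (Fin k → A) → Prop,
        (Equivalence σ ∧ ∀ u v : Fin k → A, ∀ a : A, σ u v → σ (wcons a u) (wcons a v)) ∧
        (∀ x y : ℕ → A, ρ x y ↔ σ (fun i : Fin k => x i) (fun i : Fin k => y i)))) ∧
    ((IsOpen {p : (ℕ → A) × (ℕ → A) | ρ p.1 p.2}) ↔
      (IsClosed {p : (ℕ → A) × (ℕ → A) | ρ p.1 p.2} ∧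
        Set.Finite {s : Set (ℕ → A) | ∃ x : ℕ → A, s = {y | ρ x y}})) := by
  have hclasses := isOpen_setOf_rel_iff_forall_isOpen hρ.1
  have hlift : IsOpen {p : (ℕ → A) × (ℕ → A) | ρ p.1 p.2} → ∃ k, 1 ≤ k ∧ IsSuffixLift ρ k := by
    intro hopen
    obtain ⟨k, hk, hk1⟩ :=
      ((eventually_rel_of_mem_cylinder hρ.1 (hclasses.1 hopen)).and (eventually_ge_atTop 1)).exists
    exact ⟨k, hk1, isSuffixLift_of_rel_of_mem_cylinder hρ hk⟩
  have hlift_open : (∃ k, 1 ≤ k ∧ IsSuffixLift ρ k) → IsOpen {p : (ℕ → A) × (ℕ → A) | ρ p.1 p.2} :=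
    fun ⟨_, _, hk⟩ => hk.isClopen.isOpen
  refine ⟨hclasses, ⟨hlift, hlift_open⟩, fun hopen => ?_, fun ⟨hclosed, hfin⟩ =>
    hclasses.2 (isOpen_rel_class_of_isClosed_of_finite hρ.1 hclosed hfin)⟩
  obtain ⟨k, -, hk⟩ := hlift hopen
  exact ⟨hk.isClopen.isClosed, hk.finite_classes⟩
end

section
/- The right congruence ρ on {a,b}^{-ω} defined by x ρ y iff (b occurs in x iff b occurs in y) has exactly two classes but is not closed for the suffix metric. -/
/-! The relation only records whether `b` occurs, so it has the two classes of `fun _ => a` and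
`fun _ => b`, and appending a letter can only make `b` occur. It is not closed because the words
with a single `b` at position `k` converge to the word `fun _ => a` as `k → ∞`: the set of words
in which `b` occurs is not closed, and it is a slice of the relation. -/

open Filter Topology

section Occurrence

variable {A : Type*}

theorem exists_lapp_singleton_eq_iff (x : ℕ → A) (c b : A) :
    (∃ n, lapp x [c] n = b) ↔ c = b ∨ ∃ n, x n = b := by
  constructor
  · rintro ⟨n, hn⟩
    rcases n with _ | n
    · left; simpa [lapp] using hn
    · right; exact ⟨n, by simpa [lapp] using hn⟩
  · rintro (rfl | ⟨n, hn⟩)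
    · exact ⟨0, by simp [lapp]⟩
    · exact ⟨n + 1, by simpa [lapp] using hn⟩

theorem isRightCongruence_occurs (b : A) :
    IsRightCongruence (fun x y : ℕ → A => (∃ n, x n = b) ↔ (∃ n, y n = b)) := by
  refine ⟨⟨fun _ => Iff.rfl, Iff.symm, Iff.trans⟩, fun x y c hxy => ?_⟩
  dsimp only at hxy ⊢
  rw [exists_lapp_singleton_eq_iff, exists_lapp_singleton_eq_iff, hxy]

theorem tendsto_update_const_atTop [TopologicalSpace A] (a b : A) :
    Tendsto (fun k : ℕ => Function.update (fun _ : ℕ => a) k b) atTop (𝓝 fun _ => a) := by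
  rw [tendsto_pi_nhds]
  intro n
  refine tendsto_const_nhds.congr' ?_
  filter_upwards [eventually_gt_atTop n] with k hk
  simp [hk.ne]

theorem not_isClosed_setOf_exists_eq [TopologicalSpace A] {a b : A} (hab : a ≠ b) :
    ¬ IsClosed {x : ℕ → A | ∃ n, x n = b} := by
  intro hcl
  obtain ⟨n, hn⟩ := hcl.mem_of_tendsto (tendsto_update_const_atTop a b)
    (Eventually.of_forall fun k => ⟨k, by simp⟩)
  exact hab hn

end Occurrence

theorem occurrence_congruence_two_classes_not_closed_general {A : Type*}
    [TopologicalSpace A] (a b : A) (hab : a ≠ b) :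
    IsRightCongruence (fun x y : ℕ → A => ((∃ n, x n = b) ↔ (∃ n, y n = b))) ∧
    (∃ x y : ℕ → A, ¬ ((∃ n, x n = b) ↔ (∃ n, y n = b)) ∧
      ∀ z : ℕ → A, ((∃ n, z n = b) ↔ (∃ n, x n = b)) ∨ ((∃ n, z n = b) ↔ (∃ n, y n = b))) ∧
    ¬ IsClosed {p : (ℕ → A) × (ℕ → A) | (∃ n, p.1 n = b) ↔ (∃ n, p.2 n = b)} := by
  have hb : ∃ _ : ℕ, b = b := ⟨0, rfl⟩
  have ha : ¬ ∃ _ : ℕ, a = b := fun ⟨_, h⟩ => hab h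
  refine ⟨isRightCongruence_occurs b, ⟨fun _ => a, fun _ => b, by tauto, fun z => by tauto⟩, ?_⟩
  intro hcl
  have hslice : IsClosed {x : ℕ → A | (∃ n, x n = b) ↔ ∃ _ : ℕ, b = b} :=
    hcl.preimage (continuous_id.prodMk continuous_const)
  exact not_isClosed_setOf_exists_eq hab (by simpa using hslice)

/-- over A = {a,b}, the relation "b occurs in x iff b occurs in y"
  is a right congruence on A^{-ω} with exactly two classes, but it is not closed. -/
theorem occurrence_congruence_two_classes_not_closed {A : Type*}
    [TopologicalSpace A] [DiscreteTopology A] (a b : A) (hab : a ≠ b)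
    (hA : ∀ c : A, c = a ∨ c = b) :
    IsRightCongruence (fun x y : ℕ → A => ((∃ n, x n = b) ↔ (∃ n, y n = b))) ∧
    (∃ x y : ℕ → A, ¬ ((∃ n, x n = b) ↔ (∃ n, y n = b)) ∧
      ∀ z : ℕ → A, ((∃ n, z n = b) ↔ (∃ n, x n = b)) ∨ ((∃ n, z n = b) ↔ (∃ n, y n = b))) ∧
    ¬ IsClosed {p : (ℕ → A) × (ℕ → A) | (∃ n, p.1 n = b) ↔ (∃ n, p.2 n = b)} :=
  occurrence_congruence_two_classes_not_closed_general a b hab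
end

section
/- For any right congruence ρ on A^{-ω} and any k ≥ 1, the transitive closure ρ^[k] of the relation ρ^(k) on A^k is a right congruence on A^k, and ρ ⊆ ⋂_{n≥1} ρ^[n]^ (the intersection over n of the lifts of ρ^[n] to A^{-ω}). -/
/-!
Appending a letter `a` to `x u` (with `|u| = k ≥ 1`) is the same as appending the leftmost
letter of `u` to `x` and then the word `u·a`; hence compatibility of `ρ` with appending letters
passes to `ρ^(k)`, and from there to its transitive closure. For the inclusion, a left infinite
word is the word obtained by deleting its length-`n` suffix, followed by that suffix, so
`x ρ y` already witnesses `xξ_n ρ^(n) yξ_n`.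
-/

/-- The relation `ρ^(k)` on `A^k`. -/
def suffixRel {A : Type*} (ρ : (ℕ → A) → (ℕ → A) → Prop) (k : ℕ) :
    (Fin k → A) → (Fin k → A) → Prop :=
  fun u v => ∃ x y : ℕ → A, ρ (lappF x u) (lappF y v)

section Words

variable {A : Type*}

theorem lapp_singleton_apply (x : ℕ → A) (b : A) (n : ℕ) :
    lapp x [b] n = if n = 0 then b else x (n - 1) := by
  by_cases h : n = 0 <;> simp [lapp, h]

theorem lapp_lappF_singleton {k : ℕ} (hk : 0 < k) (x : ℕ → A) (u : Fin k → A) (a : A) :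
    lapp (lappF x u) [a] = lappF (lapp x [u ⟨k - 1, by omega⟩]) (wcons a u) := by
  funext n
  simp only [lapp_singleton_apply, lappF, wcons]
  rcases Nat.lt_or_ge n k with hn | hn
  · rcases Nat.eq_zero_or_pos n with rfl | hn0
    · simp [hk]
    · simp [hn, hn0.ne', show n - 1 < k by omega]
  · rcases hn.eq_or_lt with rfl | hn
    · simp [hk, hk.ne']
    · simp [show ¬ n < k by omega, show ¬ n - 1 < k by omega, show n ≠ 0 by omega,
        show n - k ≠ 0 by omega, show n - 1 - k = n - k - 1 by omega]

theorem lappF_shift_restrict (z : ℕ → A) (n : ℕ) :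
    lappF (fun m => z (m + n)) (fun i : Fin n => z i) = z := by
  funext m
  simp only [lappF]
  split
  · rfl
  · congr 1; omega

end Words

section SuffixRel

variable {A : Type*} {ρ : (ℕ → A) → (ℕ → A) → Prop}

theorem suffixRel_refl (hρ : ∀ x, ρ x x) {k : ℕ} (hk : 0 < k) (u : Fin k → A) :
    suffixRel ρ k u u :=
  ⟨fun _ => u ⟨0, hk⟩, fun _ => u ⟨0, hk⟩, hρ _⟩

theorem suffixRel_symm (hρ : ∀ {x y}, ρ x y → ρ y x) {k : ℕ} {u v : Fin k → A}
    (h : suffixRel ρ k u v) : suffixRel ρ k v u :=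
  let ⟨x, y, hxy⟩ := h
  ⟨y, x, hρ hxy⟩

theorem suffixRel_wcons (hρ : IsRightCongruence ρ) {k : ℕ} (hk : 0 < k) (a : A)
    {u v : Fin k → A} (h : suffixRel ρ k u v) : suffixRel ρ k (wcons a u) (wcons a v) := by
  obtain ⟨x, y, hxy⟩ := h
  refine ⟨lapp x [u ⟨k - 1, by omega⟩], lapp y [v ⟨k - 1, by omega⟩], ?_⟩
  rw [← lapp_lappF_singleton hk, ← lapp_lappF_singleton hk]
  exact hρ.2 _ _ a hxy

theorem suffixRel_restrict {x y : ℕ → A} (h : ρ x y) (n : ℕ) :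
    suffixRel ρ n (fun i : Fin n => x i) (fun i : Fin n => y i) :=
  ⟨fun m => x (m + n), fun m => y (m + n), by rwa [lappF_shift_restrict, lappF_shift_restrict]⟩

theorem equivalence_transGen_suffixRel (hρ : Equivalence ρ) {k : ℕ} (hk : 0 < k) :
    Equivalence (Relation.TransGen (suffixRel ρ k)) := by
  have : Std.Symm (suffixRel ρ k) := ⟨fun _ _ => suffixRel_symm hρ.symm⟩
  exact ⟨fun u => .single (suffixRel_refl hρ.refl hk u), fun h => symm h, .trans⟩

theorem transGen_suffixRel_wcons (hρ : IsRightCongruence ρ) {k : ℕ} (hk : 0 < k) (a : A)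
    {u v : Fin k → A} (h : Relation.TransGen (suffixRel ρ k) u v) :
    Relation.TransGen (suffixRel ρ k) (wcons a u) (wcons a v) :=
  Relation.TransGen.lift (wcons a) (fun _ _ => suffixRel_wcons hρ hk a) _ _ h

end SuffixRel

theorem transClosure_rightCongruence_and_approx_general {A : Type*}
    (ρ : (ℕ → A) → (ℕ → A) → Prop) (hρ : IsRightCongruence ρ) (k : ℕ) (hk : 1 ≤ k) :
    (Equivalence (Relation.TransGen
        (fun u v : Fin k → A => ∃ x y : ℕ → A, ρ (lappF x u) (lappF y v))) ∧
      (∀ u v : Fin k → A, ∀ a : A,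
        Relation.TransGen (fun u v : Fin k → A => ∃ x y : ℕ → A, ρ (lappF x u) (lappF y v)) u v →
        Relation.TransGen (fun u v : Fin k → A => ∃ x y : ℕ → A, ρ (lappF x u) (lappF y v))
          (wcons a u) (wcons a v))) ∧
    (∀ x y : ℕ → A, ρ x y → ∀ n : ℕ, 1 ≤ n →
      Relation.TransGen (fun u v : Fin n → A => ∃ x' y' : ℕ → A, ρ (lappF x' u) (lappF y' v))
        (fun i : Fin n => x i) (fun i : Fin n => y i)) :=
  ⟨⟨equivalence_transGen_suffixRel hρ.1 hk, fun _ _ a => transGen_suffixRel_wcons hρ hk a⟩,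
    fun _ _ hxy n _ => .single (suffixRel_restrict hxy n)⟩

/-- for a right congruence ρ on A^{-ω} and k ≥ 1, the transitive
  closure ρ^[k] of ρ^(k) is a right congruence on A^k, and ρ is contained in the
  intersection over n ≥ 1 of the lifts of ρ^[n]. -/
theorem transClosure_rightCongruence_and_approx {A : Type*} [Fintype A]
    (ρ : (ℕ → A) → (ℕ → A) → Prop) (hρ : IsRightCongruence ρ) (k : ℕ) (hk : 1 ≤ k) :
    (Equivalence (Relation.TransGen
        (fun u v : Fin k → A => ∃ x y : ℕ → A, ρ (lappF x u) (lappF y v))) ∧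
      (∀ u v : Fin k → A, ∀ a : A,
        Relation.TransGen (fun u v : Fin k → A => ∃ x y : ℕ → A, ρ (lappF x u) (lappF y v)) u v →
        Relation.TransGen (fun u v : Fin k → A => ∃ x y : ℕ → A, ρ (lappF x u) (lappF y v))
          (wcons a u) (wcons a v))) ∧
    (∀ x y : ℕ → A, ρ x y → ∀ n : ℕ, 1 ≤ n →
      Relation.TransGen (fun u v : Fin n → A => ∃ x' y' : ℕ → A, ρ (lappF x' u) (lappF y' v))
        (fun i : Fin n => x i) (fun i : Fin n => y i)) :=
  transClosure_rightCongruence_and_approx_general ρ hρ k hk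
end

section
/- Let I be a two-sided ideal of A* (with |A| ≥ 2). The right congruence τ_I on A^{-ω} is open if and only if A* ∖ I is finite, if and only if the suffix-minimal elements of I form a finite maximal suffix code. -/
/-- the relation τ_P: x τ_P y iff x = y or some u ∈ P is a common suffix of x and y -/
def relTau {A : Type*} (P : Set (List A)) : (ℕ → A) → (ℕ → A) → Prop :=
  fun x y => x = y ∨ ∃ u ∈ P, IsLSuffix u x ∧ IsLSuffix u y

/-- the suffix-minimal elements of L ⊆ A* (denoted Lβ_ℓ) -/
def minSuffix {A : Type*} (L : Set (List A)) : Set (List A) :=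
  {u | u ∈ L ∧ ∀ v ∈ L, v <:+ u → v = u}

/-- suffix code: an antichain for the suffix order -/
def IsSuffixCode {A : Type*} (S : Set (List A)) : Prop :=
  ∀ u ∈ S, ∀ v ∈ S, u <:+ v → u = v

/-!
If `A* ∖ I` is finite, every long enough word lies in `I`, so `x τ_I y` holds on a product of
cylinders around `(x, y)`; moreover every word is a suffix of a word of `I`, which makes `Iβ_ℓ`
maximal, and every element of `Iβ_ℓ` has its tail outside `I`, which makes it finite.

Conversely `A* ∖ I` is suffix-closed, so if it is infinite, compactness of `A^{-ω}` (König's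
lemma) yields a left infinite word `x` none of whose suffixes lies in `I`. Then the class of `x`
is `{x}`, and no neighbourhood of `(x, x)` lies in `τ_I` since `A` has two letters. Adding a
suffix of `x` longer than all words of a finite `Iβ_ℓ` keeps it a suffix code.
-/

open PiNat Topology

section Words

variable {A : Type*} {u v : List A} {x : ℕ → A}

/- `PiNat.res x n = [x (n-1), …, x 0]` is the suffix of length `n` of the left infinite word `x`,
since index `0` is the rightmost letter. -/

lemma reverse_res (x : ℕ → A) (n : ℕ) :
    (res x n).reverse = List.ofFn fun i : Fin n => x i := by
  induction n with
  | zero => rfl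
  | succ n ih => rw [List.ofFn_succ', List.concat_eq_append, res_succ, List.reverse_cons, ih]; rfl

lemma isLSuffix_iff_res_eq : IsLSuffix u x ↔ res x u.length = u := by
  rw [← List.reverse_inj, reverse_res]
  constructor
  · rintro ⟨y, rfl⟩
    exact List.ext_getElem (by simp) fun i _ _ => by simp [lapp]
  · intro h
    refine ⟨fun n => x (n + u.length), funext fun n => ?_⟩
    unfold lapp
    split_ifs with hn
    · rw [← List.getElem_of_eq h (by simpa using hn), List.getElem_ofFn]
    · exact congrArg x (Nat.sub_add_cancel (not_lt.1 hn)).symm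

lemma isLSuffix_res (x : ℕ → A) (n : ℕ) : IsLSuffix (res x n) x := by
  rw [isLSuffix_iff_res_eq, res_length]

lemma res_suffix_res (x : ℕ → A) {m n : ℕ} (h : m ≤ n) : res x m <:+ res x n := by
  induction h with
  | refl => exact List.suffix_refl _
  | step _ ih => exact ih.trans (List.suffix_cons _ _)

lemma IsLSuffix.of_suffix (hvu : v <:+ u) (hu : IsLSuffix u x) : IsLSuffix v x := by
  rw [isLSuffix_iff_res_eq] at hu ⊢
  have hres : res x v.length <:+ u := hu ▸ res_suffix_res x hvu.length_le
  rcases List.suffix_or_suffix_of_suffix hres hvu with h | h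
  · exact h.eq_of_length (res_length x _)
  · exact (h.eq_of_length (res_length x _).symm).symm

lemma IsLSuffix.cylinder_subset (hu : IsLSuffix u x) :
    cylinder x u.length ⊆ {y | IsLSuffix u y} := by
  intro y hy
  rw [cylinder_eq_res] at hy
  rw [Set.mem_ofPred_eq, isLSuffix_iff_res_eq, hy, ← isLSuffix_iff_res_eq]
  exact hu

end Words

section Topology

variable {A : Type*} [TopologicalSpace A] [DiscreteTopology A]

lemma cylinder_mem_nhds (x : ℕ → A) (n : ℕ) : cylinder x n ∈ 𝓝 x :=
  (isOpen_cylinder _ x n).mem_nhds (self_mem_cylinder x n)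

lemma exists_cylinder_subset_of_mem_nhds {U : Set (ℕ → A)} {x : ℕ → A} (hU : U ∈ 𝓝 x) :
    ∃ n, cylinder x n ⊆ U := by
  obtain ⟨_, ⟨y, n, rfl⟩, hx, hsub⟩ :=
    (isTopologicalBasis_cylinders fun _ => A).mem_nhds_iff.1 hU
  exact ⟨n, mem_cylinder_iff_eq.1 hx ▸ hsub⟩

lemma isOpen_setOf_res_mem (S : Set (List A)) (n : ℕ) :
    IsOpen {x : ℕ → A | res x n ∈ S} := by
  refine isOpen_iff_mem_nhds.2 fun x hx => Filter.mem_of_superset (cylinder_mem_nhds x n) ?_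
  intro y hy
  rw [cylinder_eq_res] at hy
  rwa [Set.mem_ofPred_eq, hy]

end Topology

theorem exists_forall_isLSuffix_mem {A : Type*} [Finite A] {L : Set (List A)}
    (hL : ∀ u ∈ L, ∀ v, v <:+ u → v ∈ L) (hinf : L.Infinite) :
    ∃ x : ℕ → A, ∀ u, IsLSuffix u x → u ∈ L := by
  let _ : TopologicalSpace A := ⊥
  have : DiscreteTopology A := ⟨rfl⟩
  set K : ℕ → Set (ℕ → A) := fun n => {x | res x n ∈ L}
  have hK_closed (n : ℕ) : IsClosed (K n) := isOpen_compl_iff.1 (isOpen_setOf_res_mem Lᶜ n)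
  have hK_anti (n : ℕ) : K (n + 1) ⊆ K n := fun x hx => hL _ hx _ (res_suffix_res x n.le_succ)
  have hK_nonempty (n : ℕ) : (K n).Nonempty := by
    obtain ⟨u, huL, hlong⟩ := hinf.exists_notMem_finite (List.finite_length_le A n)
    replace hlong : n < u.length := not_le.1 hlong
    obtain ⟨a, t, rfl⟩ := List.exists_cons_of_length_pos (n.zero_le.trans_lt hlong)
    set x := lapp (fun _ => a) (a :: t)
    have hx : res x (a :: t).length = a :: t := isLSuffix_iff_res_eq.1 ⟨_, rfl⟩
    exact ⟨x, hL _ huL _ (hx ▸ res_suffix_res x hlong.le)⟩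
  obtain ⟨x, hx⟩ := IsCompact.nonempty_iInter_of_sequence_nonempty_isCompact_isClosed K hK_anti
    hK_nonempty (hK_closed 0).isCompact hK_closed
  exact ⟨x, fun u hu => isLSuffix_iff_res_eq.1 hu ▸ Set.mem_iInter.1 hx u.length⟩

section SuffixCodes

variable {A : Type*} {L S : Set (List A)} {u w : List A}

lemma isSuffixCode_minSuffix (L : Set (List A)) : IsSuffixCode (minSuffix L) :=
  fun _ hu _ hv huv => hv.2 _ hu.1 huv

lemma exists_minSuffix_suffix (hu : u ∈ L) : ∃ v ∈ minSuffix L, v <:+ u := by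
  obtain ⟨v, ⟨hvL, hvu⟩, hmin⟩ :=
    (measure List.length).wf.has_min {v | v ∈ L ∧ v <:+ u} ⟨u, hu, List.suffix_refl u⟩
  refine ⟨v, ⟨hvL, fun w hwL hwv => hwv.eq_of_length ?_⟩, hvu⟩
  exact le_antisymm hwv.length_le (not_lt.1 (hmin w ⟨hwL, hwv.trans hvu⟩))

lemma not_mem_of_cons_mem_minSuffix {a : A} {t : List A} (h : a :: t ∈ minSuffix L) : t ∉ L :=
  fun ht => by simpa using congrArg List.length (h.2 t ht (List.suffix_cons a t))

lemma isSuffixCode_insert_iff (hS : IsSuffixCode S) (hu : u ∉ S) :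
    IsSuffixCode (insert u S) ↔ ∀ v ∈ S, ¬ v <:+ u ∧ ¬ u <:+ v := by
  constructor
  · intro hcode v hv
    have hvu : v ≠ u := fun h => hu (h ▸ hv)
    exact ⟨fun h => hvu (hcode v (Set.mem_insert_of_mem u hv) u (Set.mem_insert u S) h),
      fun h => hvu (hcode u (Set.mem_insert u S) v (Set.mem_insert_of_mem u hv) h).symm⟩
  · rintro h v (rfl | hv) w (rfl | hw) hvw
    · rfl
    · exact absurd hvw (h w hw).2
    · exact absurd hvw (h v hv).1
    · exact hS v hv w hw hvw

lemma not_isSuffixCode_insert_minSuffix (hu : u ∉ minSuffix L) (hw : w ∈ L) (huw : u <:+ w) :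
    ¬ IsSuffixCode (insert u (minSuffix L)) := by
  rw [isSuffixCode_insert_iff (isSuffixCode_minSuffix L) hu]
  obtain ⟨v, hv, hvw⟩ := exists_minSuffix_suffix hw
  exact fun h => (List.suffix_or_suffix_of_suffix hvw huw).elim (h v hv).1 (h v hv).2

end SuffixCodes

section RelTau

variable {A : Type*} {I : Set (List A)}

lemma exists_forall_mem_of_length_gt (hF : Iᶜ.Finite) :
    ∃ N, ∀ u : List A, N < u.length → u ∈ I := by
  obtain ⟨N, hN⟩ := (hF.image List.length).bddAbove
  exact ⟨N, fun u hu => by_contra fun h => hu.not_ge (hN ⟨u, h, rfl⟩)⟩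

lemma exists_forall_not_isLSuffix [Finite A] (hI : ∀ u ∈ I, ∀ v, v ++ u ∈ I)
    (hinf : Iᶜ.Infinite) :
    ∃ x : ℕ → A, ∀ u ∈ I, ¬ IsLSuffix u x := by
  have hsuffix : ∀ u ∈ Iᶜ, ∀ v, v <:+ u → v ∈ Iᶜ := by
    rintro u hu v ⟨t, rfl⟩ hv
    exact hu (hI v hv t)
  obtain ⟨x, hx⟩ := exists_forall_isLSuffix_mem hsuffix hinf
  exact ⟨x, fun u hu hux => hx u hux hu⟩

lemma finite_minSuffix_of_finite_compl [Finite A] (hF : Iᶜ.Finite) : (minSuffix I).Finite := by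
  refine ((Set.finite_singleton []).union
    (Set.finite_iUnion fun a : A => hF.image (List.cons a))).subset ?_
  rintro (_ | ⟨a, t⟩) hu
  · exact Or.inl rfl
  · exact Or.inr (Set.mem_iUnion.2 ⟨a, t, not_mem_of_cons_mem_minSuffix hu, rfl⟩)

lemma not_isSuffixCode_insert_minSuffix_of_finite_compl [Nonempty A] (hF : Iᶜ.Finite)
    {u : List A} (hu : u ∉ minSuffix I) : ¬ IsSuffixCode (insert u (minSuffix I)) := by
  obtain ⟨N, hN⟩ := exists_forall_mem_of_length_gt hF
  obtain ⟨a⟩ := ‹Nonempty A›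
  exact not_isSuffixCode_insert_minSuffix hu
    (hN (List.replicate (N + 1) a ++ u) (by simp; omega)) (List.suffix_append _ _)

lemma finite_compl_of_maximal_minSuffix [Finite A] (hI : ∀ u ∈ I, ∀ v, v ++ u ∈ I)
    (hfin : (minSuffix I).Finite)
    (hmax : ∀ u, u ∉ minSuffix I → ¬ IsSuffixCode (insert u (minSuffix I))) :
    Iᶜ.Finite := by
  by_contra hinf
  obtain ⟨x, hx⟩ := exists_forall_not_isLSuffix hI hinf
  obtain ⟨N, hN⟩ := (hfin.image List.length).bddAbove
  have hu : res x (N + 1) ∉ minSuffix I := fun h => hx _ h.1 (isLSuffix_res x _)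
  refine hmax _ hu ((isSuffixCode_insert_iff (isSuffixCode_minSuffix I) hu).2 fun v hv =>
    ⟨fun hvu => hx v hv.1 ((isLSuffix_res x _).of_suffix hvu), fun huv => ?_⟩)
  have hv_short : v.length ≤ N := hN ⟨v, hv, rfl⟩
  have hu_long := huv.length_le
  rw [res_length] at hu_long
  omega

variable [TopologicalSpace A] [DiscreteTopology A]

lemma isOpen_relTau_of_finite_compl (hF : Iᶜ.Finite) :
    IsOpen {p : (ℕ → A) × (ℕ → A) | relTau I p.1 p.2} := by
  obtain ⟨N, hN⟩ := exists_forall_mem_of_length_gt hF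
  rw [isOpen_iff_mem_nhds]
  rintro ⟨x, y⟩ (hxy : relTau I x y)
  obtain ⟨u, huI, hux, huy⟩ : ∃ u ∈ I, IsLSuffix u x ∧ IsLSuffix u y := by
    rcases hxy with rfl | h
    · exact ⟨res x (N + 1), hN _ (by simp), isLSuffix_res x _, isLSuffix_res x _⟩
    · exact h
  refine Filter.mem_of_superset (prod_mem_nhds (cylinder_mem_nhds x u.length)
    (cylinder_mem_nhds y u.length)) ?_
  rintro ⟨x', y'⟩ ⟨hx', hy'⟩
  exact Or.inr ⟨u, huI, hux.cylinder_subset hx', huy.cylinder_subset hy'⟩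

lemma finite_compl_of_isOpen_relTau [Finite A] [Nontrivial A]
    (hI : ∀ u ∈ I, ∀ v, v ++ u ∈ I)
    (hopen : IsOpen {p : (ℕ → A) × (ℕ → A) | relTau I p.1 p.2}) : Iᶜ.Finite := by
  by_contra hinf
  obtain ⟨x, hx⟩ := exists_forall_not_isLSuffix hI hinf
  obtain ⟨U, hU, V, hV, hUV⟩ := mem_nhds_prod_iff.1 (hopen.mem_nhds (Or.inl rfl : relTau I x x))
  obtain ⟨n, hn⟩ := exists_cylinder_subset_of_mem_nhds hV
  obtain ⟨c, hc⟩ := exists_ne (x n)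
  have hxy : relTau I x (Function.update x n c) :=
    hUV (Set.mk_mem_prod (mem_of_mem_nhds hU) (hn (update_mem_cylinder x n c)))
  rcases hxy with heq | ⟨u, huI, hux, -⟩
  · exact hc (by simpa using (congrFun heq n).symm)
  · exact hx u huI hux

end RelTau

/-- for a two-sided ideal I of A* (|A| ≥ 2): τ_I is open iff
  A* ∖ I is finite, iff the suffix-minimal elements of I form a finite maximal
  suffix code. -/
theorem relTau_open_iff {A : Type*} [Fintype A] [TopologicalSpace A] [DiscreteTopology A]
    (h2 : ∃ a b : A, a ≠ b) (I : Set (List A))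
    (hI : ∀ u ∈ I, ∀ v w : List A, v ++ u ++ w ∈ I) :
    (IsOpen {p : (ℕ → A) × (ℕ → A) | relTau I p.1 p.2} ↔
      Set.Finite {u : List A | u ∉ I}) ∧
    (IsOpen {p : (ℕ → A) × (ℕ → A) | relTau I p.1 p.2} ↔
      (Set.Finite (minSuffix I) ∧ IsSuffixCode (minSuffix I) ∧
        ∀ u : List A, u ∉ minSuffix I → ¬ IsSuffixCode (insert u (minSuffix I)))) := by
  have : Nontrivial A := nontrivial_iff.2 h2
  have hI_left : ∀ u ∈ I, ∀ v, v ++ u ∈ I := fun u hu v => by simpa using hI u hu v []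
  have open_iff : IsOpen {p : (ℕ → A) × (ℕ → A) | relTau I p.1 p.2} ↔ Iᶜ.Finite :=
    ⟨finite_compl_of_isOpen_relTau hI_left, isOpen_relTau_of_finite_compl⟩
  refine ⟨open_iff, open_iff.trans ⟨fun hF => ?_, fun ⟨hfin, _, hmax⟩ => ?_⟩⟩
  · exact ⟨finite_minSuffix_of_finite_compl hF, isSuffixCode_minSuffix I,
      fun _ => not_isSuffixCode_insert_minSuffix_of_finite_compl hF⟩
  · exact finite_compl_of_maximal_minSuffix hI_left hfin hmax
end

section
/- If |A| > 1 and L, L' are left ideals of A*, then τ_L ⊆ τ_{L'} if and only if L ⊆ L'. -/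
/-! Pad a word `u ∈ L` on the left with two different constant words `…aaa u` and `…bbb u`.
These are `τ_L`-related, and any common suffix of them is a suffix of `u`, since they already
differ at the position just left of `u`. So `τ_L ⊆ τ_{L'}` yields some `v ∈ L'` that is a suffix
of `u`, and `u ∈ L'` because `L'` is a left ideal. -/

section LeftInfiniteWords

variable {A : Type*}

lemma lapp_apply_of_lt (x : ℕ → A) (u : List A) {n : ℕ} (h : n < u.length) :
    lapp x u n = u.reverse[n]'(by simpa using h) := by
  simp [lapp, h]

lemma lapp_apply_length (x : ℕ → A) (u : List A) : lapp x u u.length = x 0 := by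
  simp [lapp]

lemma IsLSuffix.apply_eq {v : List A} {x : ℕ → A} (hv : IsLSuffix v x) {n : ℕ}
    (h : n < v.length) : x n = v.reverse[n]'(by simpa using h) := by
  obtain ⟨z, rfl⟩ := hv
  exact lapp_apply_of_lt z v h

lemma IsLSuffix.isSuffix_of_length_le {v w : List A} {x : ℕ → A} (hv : IsLSuffix v x)
    (hw : IsLSuffix w x) (hle : v.length ≤ w.length) : v <:+ w := by
  rw [← List.reverse_prefix, List.prefix_iff_eq_take]
  refine List.ext_getElem (by simp [hle]) fun i hiv _ => ?_
  have hiv : i < v.length := by simpa using hiv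
  rw [List.getElem_take, ← hv.apply_eq hiv, hw.apply_eq (hiv.trans_le hle)]

lemma isSuffix_of_isLSuffix_lapp_const {a b : A} (hab : a ≠ b) {u v : List A}
    (ha : IsLSuffix v (lapp (fun _ => a) u)) (hb : IsLSuffix v (lapp (fun _ => b) u)) :
    v <:+ u := by
  by_cases hle : v.length ≤ u.length
  · exact ha.isSuffix_of_length_le ⟨_, rfl⟩ hle
  · refine absurd ?_ hab
    have hlt : u.length < v.length := not_le.mp hle
    rw [← lapp_apply_length (fun _ => a) u, ← lapp_apply_length (fun _ => b) u,
      ha.apply_eq hlt, hb.apply_eq hlt]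

end LeftInfiniteWords

lemma relTau_mono {A : Type*} {P P' : Set (List A)} (h : P ⊆ P') {x y : ℕ → A}
    (hxy : relTau P x y) : relTau P' x y :=
  hxy.imp_right fun ⟨u, hu, hx, hy⟩ => ⟨u, h hu, hx, hy⟩

theorem relTau_mono_iff_general {A : Type*} (h2 : ∃ a b : A, a ≠ b)
    (L L' : Set (List A))
    (hL' : ∀ u ∈ L', ∀ v : List A, v ++ u ∈ L') :
    (∀ x y : ℕ → A, relTau L x y → relTau L' x y) ↔ L ⊆ L' := by
  refine ⟨fun h u hu => ?_, fun h _ _ => relTau_mono h⟩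
  obtain ⟨a, b, hab⟩ := h2
  have hne : lapp (fun _ => a) u ≠ lapp (fun _ => b) u := fun he =>
    hab (by simpa [lapp_apply_length] using congrFun he u.length)
  obtain ⟨v, hv, hva, hvb⟩ := (h _ _ (Or.inr ⟨u, hu, ⟨_, rfl⟩, ⟨_, rfl⟩⟩)).resolve_left hne
  obtain ⟨w, rfl⟩ := isSuffix_of_isLSuffix_lapp_const hab hva hvb
  exact hL' v hv w

/-- if |A| > 1 and L, L' are left ideals of A*, then
  τ_L ⊆ τ_{L'} iff L ⊆ L'. -/
theorem relTau_mono_iff {A : Type*} [Fintype A] (h2 : ∃ a b : A, a ≠ b)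
    (L L' : Set (List A))
    (hL : ∀ u ∈ L, ∀ v : List A, v ++ u ∈ L)
    (hL' : ∀ u ∈ L', ∀ v : List A, v ++ u ∈ L') :
    (∀ x y : ℕ → A, relTau L x y → relTau L' x y) ↔ L ⊆ L' :=
  relTau_mono_iff_general h2 L L' hL'
end
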